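/- Let G be a finite directed graph whose underlying undirected graph is connected, and let (f, v, g) be a solution of the discrete transport equation with endpoints f0 = f(0), f1 = f(1) such that I_1(v, g) = W1(f0, f1) (the pair achieves the Wasserstein-1 infimum) and |v(t)_k| = W1(f0, f1) for every t ∈ [0,1] and every edge k with g(t)_k > 0 (constant speed). Then the path f is a constant speed W1 geodesic: W1(f(s), f(t)) = |s−t| · W1(f0, f1) for all s, t ∈ [0,1]. -/

import Mathlib

open scoped BigOperators
open Set

/-- A probability distribution on a finite set. -/
def IsProbDist {S : Type*} [Fintype S] (f : S → ℝ) : Prop :=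
  (∀ s, 0 ≤ f s) ∧ ∑ s, f s = 1

/-- A coupling of two distributions on a finite set. -/
def IsCoupling {V : Type*} [Fintype V] (f0 f1 : V → ℝ) (π : V → V → ℝ) : Prop :=
  (∀ x y, 0 ≤ π x y) ∧ (∀ x, ∑ y, π x y = f0 x) ∧ (∀ y, ∑ x, π x y = f1 y)

/-- Wasserstein-1 distance w.r.t. the shortest-path distance of a graph. -/
noncomputable def W1 {V : Type*} [Fintype V] (T : SimpleGraph V) (f0 f1 : V → ℝ) : ℝ :=
  sInf {c : ℝ | ∃ π : V → V → ℝ, IsCoupling f0 f1 π ∧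
    c = ∑ x, ∑ y, (T.dist x y : ℝ) * π x y}

/-- The tail of `f` past `x` in a tree rooted at `r`: the sum of `f y` over the
vertices `y` such that the unique path from `r` to `y` passes through `x`
(equivalently, `dist r x + dist x y = dist r y`). -/
noncomputable def tailSum {V : Type*} [Fintype V] (T : SimpleGraph V) (r : V)
    (f : V → ℝ) (x : V) : ℝ :=
  ∑ y, if T.dist r x + T.dist x y = T.dist r y then f y else 0

/-- The energy functional `I_q`. -/
noncomputable def Iq {E : Type*} [Fintype E] (q : ℝ) (v g : ℝ → E → ℝ) : ℝ :=
  (∫ t in (0:ℝ)..1, ∑ k, g t k * |v t k| ^ q) ^ (1 / q)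

/-- A finite directed graph on vertex type `V` with edge type `E`. -/
structure DiGraph (V E : Type*) where
  tail : E → V
  head : E → V
  ne : ∀ k, tail k ≠ head k

namespace DiGraph

variable {V E : Type*}

/-- The signed incidence matrix. -/
def incidence [DecidableEq V] (G : DiGraph V E) (x : V) (k : E) : ℝ :=
  if G.head k = x then 1 else if G.tail k = x then -1 else 0

/-- The underlying undirected simple graph. -/
def toSimpleGraph (G : DiGraph V E) : SimpleGraph V where
  Adj x y := x ≠ y ∧ ∃ k, (G.tail k = x ∧ G.head k = y) ∨ (G.tail k = y ∧ G.head k = x)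
  symm := ⟨by rintro x y ⟨hne, k, h⟩; exact ⟨hne.symm, k, h.symm⟩⟩
  loopless := ⟨by rintro x ⟨hne, -⟩; exact hne rfl⟩

/-- `G` is a rooted tree with root `r`: the underlying graph is a tree, and every
edge is oriented away from the root. -/
def IsRootedTree (G : DiGraph V E) (r : V) : Prop :=
  G.toSimpleGraph.IsTree ∧
  ∀ k, G.toSimpleGraph.dist r (G.head k) = G.toSimpleGraph.dist r (G.tail k) + 1

end DiGraph

/-- A solution `(f, v, g)` of the discrete transport equation on `[0,1]`. -/
structure TransportSolution {V E : Type*} [Fintype V] [Fintype E] [DecidableEq V]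
    (G : DiGraph V E) where
  f : ℝ → V → ℝ
  v : ℝ → E → ℝ
  g : ℝ → E → ℝ
  f_prob : ∀ t ∈ Icc (0:ℝ) 1, IsProbDist (f t)
  g_prob : ∀ t ∈ Icc (0:ℝ) 1, IsProbDist (g t)
  v_cont : ContinuousOn (fun t => v t) (Icc (0:ℝ) 1)
  g_cont : ContinuousOn (fun t => g t) (Icc (0:ℝ) 1)
  transport : ∀ x : V, ∀ t ∈ Icc (0:ℝ) 1,
    HasDerivWithinAt (fun s => f s x) (∑ k, G.incidence x k * v t k * g t k) (Icc (0:ℝ) 1) t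

/-! Integrating the transport equation from `s` to `t` gives a flow `J` on the edges whose
divergence is `f t - f s`, and by the constant speed assumption its total mass `∑ k, |J k|` is at
most `(t - s) * W1 (f 0) (f 1)`. A flow of total mass `m` from `μ` to `ν` yields a transport plan
of cost at most `m`: move the mass of one edge between its endpoints, transport the rest by
induction, and cancel the mass that had to be added at the endpoints to keep the marginals
nonnegative; by the triangle inequality of the graph distance, that cancellation can be done
without raising the cost.
Hence `W1 (f s) (f t) ≤ (t - s) * W1 (f 0) (f 1)`, and the triangle inequality
`W1 (f 0) (f 1) ≤ W1 (f 0) (f s) + W1 (f s) (f t) + W1 (f t) (f 1)` forces equality. -/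

section Coupling

variable {V : Type*} [Fintype V]

noncomputable def couplingCost (T : SimpleGraph V) (π : V → V → ℝ) : ℝ :=
  ∑ x, ∑ y, (T.dist x y : ℝ) * π x y

lemma couplingCost_add (T : SimpleGraph V) (π π' : V → V → ℝ) :
    couplingCost T (π + π') = couplingCost T π + couplingCost T π' := by
  simp only [couplingCost, Pi.add_apply, mul_add, Finset.sum_add_distrib]

lemma couplingCost_transpose (T : SimpleGraph V) (π : V → V → ℝ) :
    couplingCost T (fun x y => π y x) = couplingCost T π := by
  rw [couplingCost, Finset.sum_comm]
  simp only [couplingCost, SimpleGraph.dist_comm]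

lemma couplingCost_single [DecidableEq V] (T : SimpleGraph V) (a b : V) (c : ℝ) :
    couplingCost T (fun x y => if x = a ∧ y = b then c else 0) = c * T.dist a b := by
  simp [couplingCost, ite_and, mul_comm]

lemma couplingCost_diag [DecidableEq V] (T : SimpleGraph V) (μ : V → ℝ) :
    couplingCost T (fun x y => if x = y then μ x else 0) = 0 := by
  simp [couplingCost]

lemma isCoupling_diag [DecidableEq V] {μ : V → ℝ} (hμ : 0 ≤ μ) :
    IsCoupling μ μ (fun x y => if x = y then μ x else 0) :=
  ⟨fun x y => by dsimp only; split_ifs; exacts [hμ x, le_rfl], fun x => by simp, fun y => by simp⟩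

lemma isCoupling_single [DecidableEq V] (a b : V) {c : ℝ} (hc : 0 ≤ c) :
    IsCoupling (Pi.single a c) (Pi.single b c) (fun x y => if x = a ∧ y = b then c else 0) :=
  ⟨fun x y => by dsimp only; split_ifs <;> simp [hc],
    fun x => by simp [ite_and, Pi.single_apply],
    fun y => by simp [ite_and, Pi.single_apply]⟩

lemma isCoupling_mul {μ ν : V → ℝ} (hμ : IsProbDist μ) (hν : IsProbDist ν) :
    IsCoupling μ ν (fun x y => μ x * ν y) :=
  ⟨fun x y => mul_nonneg (hμ.1 x) (hν.1 y),
    fun x => by rw [← Finset.mul_sum, hν.2, mul_one],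
    fun y => by rw [← Finset.sum_mul, hμ.2, one_mul]⟩

namespace IsCoupling

variable {T : SimpleGraph V} {μ ν ρ μ' ν' : V → ℝ} {π π' : V → V → ℝ}

lemma transpose (h : IsCoupling μ ν π) : IsCoupling ν μ (fun x y => π y x) :=
  ⟨fun x y => h.1 y x, h.2.2, h.2.1⟩

lemma add (h : IsCoupling μ ν π) (h' : IsCoupling μ' ν' π') :
    IsCoupling (μ + μ') (ν + ν') (π + π') :=
  ⟨fun x y => add_nonneg (h.1 x y) (h'.1 x y),
    fun x => by simp [Finset.sum_add_distrib, h.2.1, h'.2.1],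
    fun y => by simp [Finset.sum_add_distrib, h.2.2, h'.2.2]⟩

lemma couplingCost_nonneg (T : SimpleGraph V) (h : IsCoupling μ ν π) :
    0 ≤ couplingCost T π :=
  Finset.sum_nonneg fun x _ => Finset.sum_nonneg fun y _ =>
    mul_nonneg (Nat.cast_nonneg _) (h.1 x y)

lemma eq_zero_of_right_eq_zero (h : IsCoupling μ ν π) {y : V} (hy : ν y = 0) (x : V) :
    π x y = 0 :=
  (Finset.sum_eq_zero_iff_of_nonneg fun x _ => h.1 x y).1 ((h.2.2 y).trans hy) x
    (Finset.mem_univ x)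

lemma sum_mul_div_right (h : IsCoupling μ ν π) (h' : IsCoupling ν ρ π') (x y : V) :
    ∑ z, π x y * π' y z / ν y = π x y := by
  rw [← Finset.sum_div, ← Finset.mul_sum, h'.2.1 y]
  rcases eq_or_ne (ν y) 0 with hy | hy
  · simp [h.eq_zero_of_right_eq_zero hy x]
  · exact mul_div_cancel_right₀ _ hy

theorem exists_glue (hconn : T.Connected) (h : IsCoupling μ ν π) (h' : IsCoupling ν ρ π') :
    ∃ σ, IsCoupling μ ρ σ ∧ couplingCost T σ ≤ couplingCost T π + couplingCost T π' := by
  set τ : V → V → V → ℝ := fun x y z => π x y * π' y z / ν y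
  have hτ : ∀ x y z, 0 ≤ τ x y z := fun x y z =>
    div_nonneg (mul_nonneg (h.1 x y) (h'.1 y z)) ((h.2.2 y) ▸ Finset.sum_nonneg fun x _ => h.1 x y)
  have hτ_right : ∀ x y, ∑ z, τ x y z = π x y := h.sum_mul_div_right h'
  have hτ_left : ∀ y z, ∑ x, τ x y z = π' y z := fun y z => by
    simpa [τ, mul_comm] using h'.transpose.sum_mul_div_right h.transpose z y
  refine ⟨fun x z => ∑ y, τ x y z,
    ⟨fun x z => Finset.sum_nonneg fun y _ => hτ x y z, fun x => ?_, fun z => ?_⟩, ?_⟩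
  · rw [Finset.sum_comm]; simp only [hτ_right, h.2.1]
  · rw [Finset.sum_comm]; simp only [hτ_left, h'.2.2]
  calc couplingCost T (fun x z => ∑ y, τ x y z)
      ≤ ∑ x, ∑ z, ∑ y, ((T.dist x y : ℝ) + T.dist y z) * τ x y z := by
        refine Finset.sum_le_sum fun x _ => Finset.sum_le_sum fun z _ => ?_
        rw [Finset.mul_sum]
        exact Finset.sum_le_sum fun y _ => mul_le_mul_of_nonneg_right
          (mod_cast hconn.dist_triangle) (hτ x y z)
    _ = couplingCost T π + couplingCost T π' := by
        simp only [couplingCost, add_mul, Finset.sum_add_distrib]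
        congr 1
        · refine Finset.sum_congr rfl fun x _ => ?_
          rw [Finset.sum_comm]
          simp only [← Finset.mul_sum, hτ_right]
        · rw [Finset.sum_comm, Finset.sum_congr rfl fun z _ => Finset.sum_comm, Finset.sum_comm]
          simp only [← Finset.mul_sum, hτ_left]

end IsCoupling

end Coupling

section W1

variable {V : Type*} [Fintype V] {T : SimpleGraph V} {μ ν ρ : V → ℝ}

lemma W1_le_couplingCost {π : V → V → ℝ} (h : IsCoupling μ ν π) :
    W1 T μ ν ≤ couplingCost T π :=
  csInf_le ⟨0, by rintro _ ⟨π', h', rfl⟩; exact h'.couplingCost_nonneg T⟩ ⟨π, h, rfl⟩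

lemma le_W1 {a : ℝ} (hne : ∃ π, IsCoupling μ ν π)
    (h : ∀ π, IsCoupling μ ν π → a ≤ couplingCost T π) : a ≤ W1 T μ ν := by
  obtain ⟨π, hπ⟩ := hne
  exact le_csInf ⟨_, π, hπ, rfl⟩ (by rintro _ ⟨π', h', rfl⟩; exact h π' h')

lemma W1_comm (T : SimpleGraph V) (μ ν : V → ℝ) : W1 T μ ν = W1 T ν μ := by
  have key : ∀ μ ν : V → ℝ, {c | ∃ π, IsCoupling μ ν π ∧ c = couplingCost T π} ⊆
      {c | ∃ π, IsCoupling ν μ π ∧ c = couplingCost T π} := by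
    rintro μ ν _ ⟨π, hπ, rfl⟩
    exact ⟨_, hπ.transpose, (couplingCost_transpose T π).symm⟩
  exact congrArg sInf ((key μ ν).antisymm (key ν μ))

lemma W1_triangle (hconn : T.Connected) (hμ : IsProbDist μ) (hν : IsProbDist ν)
    (hρ : IsProbDist ρ) : W1 T μ ρ ≤ W1 T μ ν + W1 T ν ρ := by
  suffices W1 T μ ρ - W1 T ν ρ ≤ W1 T μ ν by linarith
  refine le_W1 ⟨_, isCoupling_mul hμ hν⟩ fun π hπ => ?_
  suffices W1 T μ ρ - couplingCost T π ≤ W1 T ν ρ by linarith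
  refine le_W1 ⟨_, isCoupling_mul hν hρ⟩ fun π' hπ' => ?_
  obtain ⟨σ, hσ, hcost⟩ := hπ.exists_glue hconn hπ'
  linarith [W1_le_couplingCost (T := T) hσ]

end W1

section Reroute

variable {V : Type*} [Fintype V] [DecidableEq V] {T : SimpleGraph V} {π : V → V → ℝ} {z : V}
  {c : ℝ}

/-- Takes `c` units proportionally out of the mass that `π` sends out of `z`, and `c` units
proportionally out of the mass it sends into `z`, and reconnects the loose ends directly. -/
noncomputable def rerouteAt (π : V → V → ℝ) (z : V) (c : ℝ) : V → V → ℝ := fun x y =>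
  π x y - (if x = z then c / (∑ w, π z w) * π z y else 0)
    - (if y = z then c / (∑ w, π w z) * π x z else 0)
    + c / ((∑ w, π z w) * ∑ w, π w z) * (π x z * π z y)

lemma rerouteAt_transpose (x y : V) :
    rerouteAt (fun x y => π y x) z c x y = rerouteAt π z c y x := by
  simp only [rerouteAt]; ring

lemma sum_rerouteAt_right (hzz : π z z = 0) (hA : ∑ w, π z w ≠ 0) (x : V) :
    ∑ y, rerouteAt π z c x y = (∑ y, π x y) - if x = z then c else 0 := by
  simp only [rerouteAt, Finset.sum_add_distrib, Finset.sum_sub_distrib, ← Finset.mul_sum,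
    Finset.sum_ite_eq', Finset.mem_univ, if_true, Finset.sum_ite_irrel, Finset.sum_const_zero]
  split_ifs with hx
  · subst hx; rw [hzz]; field_simp; ring
  · field_simp; ring

lemma rerouteAt_nonneg (hπ : ∀ x y, 0 ≤ π x y) (hzz : π z z = 0) (hc : 0 ≤ c)
    (hcA : c ≤ ∑ w, π z w) (hcB : c ≤ ∑ w, π w z) (x y : V) : 0 ≤ rerouteAt π z c x y := by
  have hA : c / ∑ w, π z w ≤ 1 := div_le_one_of_le₀ hcA (hc.trans hcA)
  have hB : c / ∑ w, π w z ≤ 1 := div_le_one_of_le₀ hcB (hc.trans hcB)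
  have hAB : 0 ≤ c / ((∑ w, π z w) * ∑ w, π w z) :=
    div_nonneg hc (mul_nonneg (hc.trans hcA) (hc.trans hcB))
  have hxz := hπ x z
  have hzy := hπ z y
  simp only [rerouteAt]
  split_ifs with hx hy hy
  · subst hx hy; simp [hzz]
  · subst hx; rw [hzz]; nlinarith
  · subst hy; rw [hzz]; nlinarith
  · nlinarith [hπ x y, mul_nonneg hAB (mul_nonneg hxz hzy)]

lemma couplingCost_rerouteAt (π : V → V → ℝ) (z : V) (c : ℝ) :
    couplingCost T (rerouteAt π z c) = couplingCost T π
      - c / (∑ w, π z w) * ∑ y, (T.dist z y : ℝ) * π z y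
      - c / (∑ w, π w z) * ∑ x, (T.dist x z : ℝ) * π x z
      + c / ((∑ w, π z w) * ∑ w, π w z) * ∑ x, ∑ y, (T.dist x y : ℝ) * (π x z * π z y) := by
  simp only [couplingCost, rerouteAt, mul_add, mul_sub, Finset.sum_add_distrib,
    Finset.sum_sub_distrib, mul_ite, mul_zero, Finset.sum_ite_irrel, Finset.sum_const_zero,
    Finset.sum_ite_eq', Finset.mem_univ, if_true]
  simp only [Finset.mul_sum, mul_left_comm]

theorem couplingCost_rerouteAt_le (hconn : T.Connected) (hπ : ∀ x y, 0 ≤ π x y) (hc : 0 ≤ c)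
    (hA : ∑ w, π z w ≠ 0) (hB : ∑ w, π w z ≠ 0) :
    couplingCost T (rerouteAt π z c) ≤ couplingCost T π := by
  have htri : ∑ x, ∑ y, (T.dist x y : ℝ) * (π x z * π z y)
      ≤ (∑ x, (T.dist x z : ℝ) * π x z) * (∑ w, π z w)
        + (∑ w, π w z) * ∑ y, (T.dist z y : ℝ) * π z y := by
    calc ∑ x, ∑ y, (T.dist x y : ℝ) * (π x z * π z y)
        ≤ ∑ x, ∑ y, ((T.dist x z : ℝ) + T.dist z y) * (π x z * π z y) :=
          Finset.sum_le_sum fun x _ => Finset.sum_le_sum fun y _ =>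
            mul_le_mul_of_nonneg_right (mod_cast hconn.dist_triangle)
              (mul_nonneg (hπ x z) (hπ z y))
      _ = _ := by
          simp only [add_mul, Finset.sum_add_distrib, Finset.sum_mul_sum]
          congr 1 <;> exact Finset.sum_congr rfl fun _ _ => Finset.sum_congr rfl fun _ _ => by ring
  have hsplit : c / ((∑ w, π z w) * ∑ w, π w z) * ((∑ x, (T.dist x z : ℝ) * π x z) *
      (∑ w, π z w) + (∑ w, π w z) * ∑ y, (T.dist z y : ℝ) * π z y)
      = c / (∑ w, π z w) * (∑ y, (T.dist z y : ℝ) * π z y)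
        + c / (∑ w, π w z) * ∑ x, (T.dist x z : ℝ) * π x z := by
    field_simp; ring
  have hγ : 0 ≤ c / ((∑ w, π z w) * ∑ w, π w z) :=
    div_nonneg hc (mul_nonneg (Finset.sum_nonneg fun w _ => hπ z w)
      (Finset.sum_nonneg fun w _ => hπ w z))
  rw [couplingCost_rerouteAt]
  linarith [mul_le_mul_of_nonneg_left htri hγ]

namespace IsCoupling

variable {μ ν : V → ℝ}

lemma rerouteAt (h : IsCoupling (μ + Pi.single z c) (ν + Pi.single z c) π) (hzz : π z z = 0)
    (hc : 0 < c) (hμ : 0 ≤ μ z) (hν : 0 ≤ ν z) : IsCoupling μ ν (rerouteAt π z c) := by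
  have hA : ∑ w, π z w = μ z + c := by simpa using h.2.1 z
  have hB : ∑ w, π w z = ν z + c := by simpa using h.2.2 z
  refine ⟨rerouteAt_nonneg h.1 hzz hc.le (by linarith) (by linarith), fun x => ?_, fun y => ?_⟩
  · rw [sum_rerouteAt_right hzz (by linarith), h.2.1 x]
    simp [Pi.single_apply]
  · rw [Finset.sum_congr rfl fun x _ => (rerouteAt_transpose y x).symm,
      sum_rerouteAt_right (π := fun x y => π y x) hzz (by linarith), h.2.2 y]
    simp [Pi.single_apply]

lemma sub_diag (h : IsCoupling (μ + Pi.single z c) (ν + Pi.single z c) π) {d : ℝ}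
    (hd : d ≤ π z z) :
    IsCoupling (μ + Pi.single z (c - d)) (ν + Pi.single z (c - d))
      (fun x y => π x y - if x = z ∧ y = z then d else 0) := by
  refine ⟨fun x y => ?_, fun x => ?_, fun y => ?_⟩
  · dsimp only
    split_ifs with hxy
    · obtain ⟨rfl, rfl⟩ := hxy; linarith
    · simpa using h.1 x y
  · have := h.2.1 x
    simp only [Pi.add_apply, Pi.single_apply] at this ⊢
    simp only [ite_and, Finset.sum_sub_distrib, this, Finset.sum_ite_irrel, Finset.sum_ite_eq',
      Finset.mem_univ, ↓reduceIte, Finset.sum_const_zero]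
    split_ifs <;> ring
  · have := h.2.2 y
    simp only [Pi.add_apply, Pi.single_apply] at this ⊢
    simp only [ite_and, Finset.sum_sub_distrib, this, Finset.sum_ite_eq', Finset.mem_univ,
      ↓reduceIte]
    split_ifs <;> ring

theorem exists_le_of_add_single (hconn : T.Connected)
    (h : IsCoupling (μ + Pi.single z c) (ν + Pi.single z c) π) (hμ : 0 ≤ μ z) (hν : 0 ≤ ν z) :
    ∃ π', IsCoupling μ ν π' ∧ couplingCost T π' ≤ couplingCost T π := by
  -- `rerouteAt` needs `π z z = 0`, so mass that `π` leaves in place at `z` is removed first.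
  set d := min c (π z z)
  set π₀ : V → V → ℝ := fun x y => π x y - if x = z ∧ y = z then d else 0
  have h₀ : IsCoupling (μ + Pi.single z (c - d)) (ν + Pi.single z (c - d)) π₀ :=
    h.sub_diag (min_le_right _ _)
  have hcost₀ : couplingCost T π₀ = couplingCost T π := by
    simp [π₀, couplingCost, mul_sub, Finset.sum_sub_distrib, ite_and]
  rcases le_or_gt c (π z z) with hle | hlt
  · rw [show c - d = 0 by simp [d, hle], Pi.single_zero, add_zero, add_zero] at h₀
    exact ⟨π₀, h₀, hcost₀.le⟩
  · have hd : d = π z z := min_eq_right hlt.le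
    have hzz : π₀ z z = 0 := by simp [π₀, hd]
    refine ⟨_, h₀.rerouteAt hzz (by linarith) hμ hν, ?_⟩
    have hA : ∑ w, π₀ z w ≠ 0 := by
      rw [h₀.2.1 z]; simp only [Pi.add_apply, Pi.single_eq_same]; linarith
    have hB : ∑ w, π₀ w z ≠ 0 := by
      rw [h₀.2.2 z]; simp only [Pi.add_apply, Pi.single_eq_same]; linarith
    exact hcost₀ ▸ couplingCost_rerouteAt_le hconn h₀.1 (by linarith) hA hB

end IsCoupling

end Reroute

namespace DiGraph

variable {V E : Type*} [DecidableEq V] (G : DiGraph V E)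

lemma exists_adj_incidence_mul_eq (k : E) (t : ℝ) : ∃ a b, G.toSimpleGraph.Adj a b ∧
    (fun x => G.incidence x k * t) = Pi.single b |t| - Pi.single a |t| := by
  have hadj : G.toSimpleGraph.Adj (G.tail k) (G.head k) := ⟨G.ne k, k, Or.inl ⟨rfl, rfl⟩⟩
  have hne := G.ne k
  rcases le_total 0 t with ht | ht
  · refine ⟨_, _, hadj, funext fun x => ?_⟩
    simp only [incidence, Pi.sub_apply, Pi.single_apply, abs_of_nonneg ht]
    split_ifs <;> grind
  · refine ⟨_, _, hadj.symm, funext fun x => ?_⟩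
    simp only [incidence, Pi.sub_apply, Pi.single_apply, abs_of_nonpos ht]
    split_ifs <;> grind

theorem exists_isCoupling_couplingCost_le [Fintype V] (hconn : G.toSimpleGraph.Connected)
    (J : E → ℝ) (s : Finset E) {μ ν : V → ℝ} (hμ : 0 ≤ μ) (hν : 0 ≤ ν)
    (hdiv : ∀ x, ν x - μ x = ∑ k ∈ s, G.incidence x k * J k) :
    ∃ π, IsCoupling μ ν π ∧ couplingCost G.toSimpleGraph π ≤ ∑ k ∈ s, |J k| := by
  classical
  induction s using Finset.induction_on generalizing μ ν with
  | empty =>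
    obtain rfl : ν = μ := funext fun x => by simpa [sub_eq_zero] using hdiv x
    exact ⟨_, isCoupling_diag hμ, by simp [couplingCost_diag]⟩
  | insert k s hk ih =>
    obtain ⟨a, b, hab, hk_inc⟩ := G.exists_adj_incidence_mul_eq k (J k)
    obtain ⟨π₁, h₁, hcost₁⟩ := ih (μ := μ + Pi.single b |J k|) (ν := ν + Pi.single a |J k|)
      (add_nonneg hμ (Pi.single_nonneg.2 (abs_nonneg _)))
      (add_nonneg hν (Pi.single_nonneg.2 (abs_nonneg _))) fun x => by
        have := hdiv x
        rw [Finset.sum_insert hk, congrFun hk_inc x] at this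
        simp only [Pi.add_apply, Pi.sub_apply] at this ⊢; linarith
    have h₀ := (isCoupling_diag hμ).add (isCoupling_single a b (abs_nonneg (J k)))
    obtain ⟨σ, hσ, hcostσ⟩ := h₀.exists_glue hconn h₁
    obtain ⟨π, hπ, hcost⟩ := hσ.exists_le_of_add_single hconn (hμ a) (hν a)
    refine ⟨π, hπ, ?_⟩
    rw [couplingCost_add, couplingCost_diag, couplingCost_single,
      SimpleGraph.dist_eq_one_iff_adj.2 hab] at hcostσ
    rw [Finset.sum_insert hk]
    push_cast at hcostσ
    linarith

end DiGraph

namespace TransportSolution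

variable {V E : Type*} [Fintype V] [Fintype E] [DecidableEq V] {G : DiGraph V E}
  (sol : TransportSolution G) {s t w : ℝ}

lemma continuousOn_flux (k : E) :
    ContinuousOn (fun u => sol.v u k * sol.g u k) (Icc (0:ℝ) 1) :=
  ((continuous_apply k).comp_continuousOn sol.v_cont).mul
    ((continuous_apply k).comp_continuousOn sol.g_cont)

lemma intervalIntegrable_flux (hs : s ∈ Icc (0:ℝ) 1) (ht : t ∈ Icc (0:ℝ) 1) (hst : s ≤ t)
    (k : E) : IntervalIntegrable (fun u => sol.v u k * sol.g u k) MeasureTheory.volume s t :=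
  ContinuousOn.intervalIntegrable <| by
    rw [uIcc_of_le hst]; exact (sol.continuousOn_flux k).mono (Icc_subset_Icc hs.1 ht.2)

lemma sub_eq_sum_incidence_integral (hs : s ∈ Icc (0:ℝ) 1) (ht : t ∈ Icc (0:ℝ) 1)
    (hst : s ≤ t) (x : V) :
    sol.f t x - sol.f s x = ∑ k, G.incidence x k * ∫ u in s..t, sol.v u k * sol.g u k := by
  have hsub : Icc s t ⊆ Icc (0:ℝ) 1 := Icc_subset_Icc hs.1 ht.2
  have hcont : ContinuousOn (fun u => sol.f u x) (Icc s t) := fun u hu =>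
    ((sol.transport x u (hsub hu)).continuousWithinAt).mono hsub
  have hderiv : ∀ u ∈ Ioo s t, HasDerivWithinAt (fun u => sol.f u x)
      (∑ k, G.incidence x k * (sol.v u k * sol.g u k)) (Ioi u) u := fun u hu => by
    simp only [← mul_assoc]
    exact (sol.transport x u (hsub (Ioo_subset_Icc_self hu))).mono_of_mem_nhdsWithin
      (Icc_mem_nhdsGT_of_mem ⟨hs.1.trans hu.1.le, hu.2.trans_le ht.2⟩)
  have hint : ∀ k, IntervalIntegrable (fun u => G.incidence x k * (sol.v u k * sol.g u k))
      MeasureTheory.volume s t := fun k =>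
    (sol.intervalIntegrable_flux hs ht hst k).const_mul _
  rw [← intervalIntegral.integral_eq_sub_of_hasDeriv_right_of_le hst hcont hderiv
    (by simpa only [Finset.sum_fn] using IntervalIntegrable.sum Finset.univ fun k _ => hint k),
    intervalIntegral.integral_finsetSum fun k _ => hint k]
  simp only [intervalIntegral.integral_const_mul]

lemma sum_abs_integral_flux_le
    (hspeed : ∀ t ∈ Icc (0:ℝ) 1, ∀ k : E, 0 < sol.g t k → |sol.v t k| = w)
    (hs : s ∈ Icc (0:ℝ) 1) (ht : t ∈ Icc (0:ℝ) 1) (hst : s ≤ t) :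
    ∑ k, |∫ u in s..t, sol.v u k * sol.g u k| ≤ (t - s) * w := by
  have hmass : ∀ u ∈ Icc s t, ∑ k, |sol.v u k * sol.g u k| = w := fun u hu => by
    have hu' : u ∈ Icc (0:ℝ) 1 := Icc_subset_Icc hs.1 ht.2 hu
    have hg := sol.g_prob u hu'
    calc ∑ k, |sol.v u k * sol.g u k| = ∑ k, sol.g u k * w :=
          Finset.sum_congr rfl fun k _ => by
            rcases (hg.1 k).eq_or_lt with h | h
            · simp [← h]
            · rw [abs_mul, abs_of_pos h, hspeed u hu' k h, mul_comm]
      _ = w := by rw [← Finset.sum_mul, hg.2, one_mul]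
  calc ∑ k, |∫ u in s..t, sol.v u k * sol.g u k|
      ≤ ∑ k, ∫ u in s..t, |sol.v u k * sol.g u k| :=
        Finset.sum_le_sum fun k _ => intervalIntegral.abs_integral_le_integral_abs hst
    _ = ∫ u in s..t, ∑ k, |sol.v u k * sol.g u k| :=
        (intervalIntegral.integral_finsetSum fun k _ =>
          (sol.intervalIntegrable_flux hs ht hst k).abs).symm
    _ = ∫ _ in s..t, w :=
        intervalIntegral.integral_congr fun u hu => hmass u (by rwa [uIcc_of_le hst] at hu)
    _ = (t - s) * w := by rw [intervalIntegral.integral_const, smul_eq_mul]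

theorem W1_le (hconn : G.toSimpleGraph.Connected)
    (hspeed : ∀ t ∈ Icc (0:ℝ) 1, ∀ k : E, 0 < sol.g t k → |sol.v t k| = w)
    (hs : s ∈ Icc (0:ℝ) 1) (ht : t ∈ Icc (0:ℝ) 1) (hst : s ≤ t) :
    W1 G.toSimpleGraph (sol.f s) (sol.f t) ≤ (t - s) * w := by
  obtain ⟨π, hπ, hcost⟩ := G.exists_isCoupling_couplingCost_le hconn _ Finset.univ
    (sol.f_prob s hs).1 (sol.f_prob t ht).1 (sol.sub_eq_sum_incidence_integral hs ht hst)
  exact (W1_le_couplingCost hπ).trans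
    (hcost.trans (sol.sum_abs_integral_flux_le hspeed hs ht hst))

end TransportSolution

theorem statement11_general {V E : Type*} [Fintype V] [Fintype E] [DecidableEq V]
    (G : DiGraph V E) (hconn : G.toSimpleGraph.Connected)
    (sol : TransportSolution G)
    (hconst : ∀ t ∈ Icc (0:ℝ) 1, ∀ k : E, 0 < sol.g t k →
      |sol.v t k| = W1 G.toSimpleGraph (sol.f 0) (sol.f 1)) :
    ∀ s ∈ Icc (0:ℝ) 1, ∀ t ∈ Icc (0:ℝ) 1,
      W1 G.toSimpleGraph (sol.f s) (sol.f t) =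
        |s - t| * W1 G.toSimpleGraph (sol.f 0) (sol.f 1) := by
  intro s hs t ht
  wlog hst : s ≤ t generalizing s t
  · rw [W1_comm, this t ht s hs (le_of_not_ge hst), abs_sub_comm]
  have h0 : (0:ℝ) ∈ Icc (0:ℝ) 1 := by norm_num
  have h1 : (1:ℝ) ∈ Icc (0:ℝ) 1 := by norm_num
  have upper_0s := sol.W1_le hconn hconst h0 hs hs.1
  have upper_st := sol.W1_le hconn hconst hs ht hst
  have upper_t1 := sol.W1_le hconn hconst ht h1 ht.2
  have tri_0s1 := W1_triangle hconn (sol.f_prob 0 h0) (sol.f_prob s hs) (sol.f_prob 1 h1)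
  have tri_st1 := W1_triangle hconn (sol.f_prob s hs) (sol.f_prob t ht) (sol.f_prob 1 h1)
  rw [abs_of_nonpos (sub_nonpos.2 hst)]
  linarith

/-- a minimising constant speed solution induces a constant speed
`W1` geodesic. -/
theorem statement11 {V E : Type*} [Fintype V] [Fintype E] [DecidableEq V]
    (G : DiGraph V E) (hconn : G.toSimpleGraph.Connected)
    (sol : TransportSolution G)
    (hmin : Iq 1 sol.v sol.g = W1 G.toSimpleGraph (sol.f 0) (sol.f 1))
    (hconst : ∀ t ∈ Icc (0:ℝ) 1, ∀ k : E, 0 < sol.g t k →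
      |sol.v t k| = W1 G.toSimpleGraph (sol.f 0) (sol.f 1)) :
    ∀ s ∈ Icc (0:ℝ) 1, ∀ t ∈ Icc (0:ℝ) 1,
      W1 G.toSimpleGraph (sol.f s) (sol.f t) =
        |s - t| * W1 G.toSimpleGraph (sol.f 0) (sol.f 1) :=
  statement11_general G hconn sol hconst
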